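/- arXiv:2501.14912 — 2 statements merged into one kernel-verified Lean document; each statement's English description precedes it below -/
import Mathlib

section
/- Let n be a natural number, α > 0 a real number, and v ∈ ℝ^n. Define L : ℝ^n × ℝ^n → ℝ by L(u, λ) = (α/2)‖u‖² + ⟨λ, v − u⟩. Then, with values taken in the extended reals (EReal), the infimum over u in the nonnegative orthant of the supremum over λ in the nonnegative orthant of L(u, λ) equals the supremum over λ in the nonnegative orthant of the infimum over u in the nonnegative orthant of L(u, λ). (Strong duality of Proposition 1, for a fixed parameter θ with v = g(θ) − ε.) -/
/-!
Write `w = v⁺` for the componentwise positive part of `v`. Then `⟪w, v - w⟫ = 0` and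
`⟪l, v - w⟫ ≤ 0` for every `l ≥ 0`, and `(w, α w)` is a saddle point of `L` on the orthant:
`L (w, l) ≤ (α/2)‖w‖² ≤ (α/2)‖w‖² + (α/2)‖u - w‖² = L (u, α w)`.
Both min-max values therefore equal `(α/2)‖w‖²`.
-/

open scoped RealInnerProductSpace

section Lagrangian

variable {E : Type*} [NormedAddCommGroup E] [InnerProductSpace ℝ E]

theorem lagrangian_smul_eq_add_norm_sub_sq (α : ℝ) {v w : E} (hw : ⟪w, v - w⟫ = 0) (u : E) :
    α / 2 * ‖u‖ ^ 2 + ⟪α • w, v - u⟫ = α / 2 * ‖w‖ ^ 2 + α / 2 * ‖u - w‖ ^ 2 := by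
  rw [inner_sub_right, real_inner_self_eq_norm_sq] at hw
  rw [real_inner_smul_left, inner_sub_right, norm_sub_sq_real, real_inner_comm u w]
  linear_combination α * hw

theorem isSaddlePointOn_lagrangian {K : Set E} {α : ℝ} (hα : 0 ≤ α) {v w : E}
    (hw : ⟪w, v - w⟫ = 0) (hK : ∀ l ∈ K, ⟪l, v - w⟫ ≤ 0) :
    IsSaddlePointOn K K (fun u l ↦ ((α / 2 * ‖u‖ ^ 2 + ⟪l, v - u⟫ : ℝ) : EReal)) w (α • w) := by
  intro u _ l hl
  rw [EReal.coe_le_coe_iff, lagrangian_smul_eq_add_norm_sub_sq α hw]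
  nlinarith [hK l hl, sq_nonneg ‖u - w‖]

theorem lagrangian_strong_duality {K : Set E} {α : ℝ} (hα : 0 ≤ α) {v w : E}
    (hwK : w ∈ K) (hαwK : α • w ∈ K) (hw : ⟪w, v - w⟫ = 0) (hK : ∀ l ∈ K, ⟪l, v - w⟫ ≤ 0) :
    ⨅ u : K, ⨆ l : K, ((α / 2 * ‖u.1‖ ^ 2 + ⟪l.1, v - u.1⟫ : ℝ) : EReal) =
      ⨆ l : K, ⨅ u : K, ((α / 2 * ‖u.1‖ ^ 2 + ⟪l.1, v - u.1⟫ : ℝ) : EReal) := by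
  obtain ⟨hinf, hsup⟩ := isSaddlePointOn_value hwK hαwK (isSaddlePointOn_lagrangian hα hw hK)
  simp only [iInf_subtype', iSup_subtype'] at hinf hsup
  exact hinf.trans hsup.symm

end Lagrangian

namespace EuclideanSpace

variable {ι : Type*}

noncomputable def posPart (v : EuclideanSpace ℝ ι) : EuclideanSpace ℝ ι :=
  WithLp.toLp 2 fun i ↦ max (v i) 0

theorem posPart_apply (v : EuclideanSpace ℝ ι) (i : ι) : posPart v i = max (v i) 0 := rfl

theorem posPart_nonneg (v : EuclideanSpace ℝ ι) (i : ι) : 0 ≤ posPart v i := le_max_right _ _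

variable [Fintype ι]

theorem inner_posPart_sub_posPart (v : EuclideanSpace ℝ ι) : ⟪posPart v, v - posPart v⟫ = 0 := by
  refine Finset.sum_eq_zero fun i _ ↦ ?_
  simp only [PiLp.sub_apply, posPart_apply, RCLike.inner_apply, conj_trivial]
  rcases le_total (v i) 0 with h | h <;> simp [h]

theorem inner_sub_posPart_nonpos (v : EuclideanSpace ℝ ι) {l : EuclideanSpace ℝ ι}
    (hl : ∀ i, 0 ≤ l i) : ⟪l, v - posPart v⟫ ≤ 0 := by
  refine Finset.sum_nonpos fun i _ ↦ mul_nonpos_of_nonpos_of_nonneg ?_ (hl i)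
  simp [posPart_apply]

end EuclideanSpace

/-- Strong duality (Proposition 1, first equality) for the inner min-max over slacks and
multipliers: with `L (u, λ) = (α/2)‖u‖² + ⟪λ, v − u⟫`, the inf over the nonnegative orthant
of the sup over the nonnegative orthant equals the sup of the inf, in the extended reals. -/
theorem rfl_inner_strong_duality (n : ℕ) (α : ℝ) (hα : 0 < α)
    (v : EuclideanSpace ℝ (Fin n)) :
    (⨅ u : {u : EuclideanSpace ℝ (Fin n) // ∀ i, 0 ≤ u i},
      ⨆ l : {l : EuclideanSpace ℝ (Fin n) // ∀ i, 0 ≤ l i},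
        ((α / 2 * ‖u.1‖ ^ 2 + ⟪l.1, v - u.1⟫ : ℝ) : EReal)) =
    (⨆ l : {l : EuclideanSpace ℝ (Fin n) // ∀ i, 0 ≤ l i},
      ⨅ u : {u : EuclideanSpace ℝ (Fin n) // ∀ i, 0 ≤ u i},
        ((α / 2 * ‖u.1‖ ^ 2 + ⟪l.1, v - u.1⟫ : ℝ) : EReal)) :=
  lagrangian_strong_duality (K := {u : EuclideanSpace ℝ (Fin n) | ∀ i, 0 ≤ u i}) hα.le
    (EuclideanSpace.posPart_nonneg v)
    (fun i ↦ mul_nonneg hα.le (EuclideanSpace.posPart_nonneg v i))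
    (EuclideanSpace.inner_posPart_sub_posPart v)
    (fun _ hl ↦ EuclideanSpace.inner_sub_posPart_nonpos v hl)
end

section
/- Let Θ be a nonempty type, n a natural number, g : Θ → ℝ^n, ε ∈ ℝ^n, and α > 0 a real number. Then, in the extended reals, the supremum over λ in the nonnegative orthant of the infimum over u in the nonnegative orthant of (α/2)‖u‖² + ⟨λ, g(θ) − ε − u⟩ equals the supremum over λ in the nonnegative orthant of ⟨λ, g(θ) − ε⟩ − ‖λ‖²/(2α), for every θ ∈ Θ. (Second equality of Proposition 1: the RFL dual reduces to a quadratically regularized FL Lagrangian.) -/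
open scoped RealInnerProductSpace

/-!
Completing the square in `u` gives
`(α/2)‖u‖² + ⟪λ, c − u⟫ = ⟪λ, c⟫ − ‖λ‖²/(2α) + (α/2)‖u − α⁻¹ • λ‖²`,
so for each `λ ≥ 0` the inner infimum is attained at `u = α⁻¹ • λ`, which again lies in the
nonnegative orthant, and its value is `⟪λ, c⟫ − ‖λ‖²/(2α)`. The two suprema then agree termwise.
-/

section InnerProductSpace

variable {E : Type*} [NormedAddCommGroup E] [InnerProductSpace ℝ E]

theorem lagrangian_eq_add_norm_sub_smul_sq {α : ℝ} (hα : α ≠ 0) (l c u : E) :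
    α / 2 * ‖u‖ ^ 2 + ⟪l, c - u⟫ =
      ⟪l, c⟫ - ‖l‖ ^ 2 / (2 * α) + α / 2 * ‖u - α⁻¹ • l‖ ^ 2 := by
  rw [norm_sub_sq_real, real_inner_smul_right, norm_smul, inner_sub_right, real_inner_comm u,
    Real.norm_eq_abs, mul_pow, sq_abs]
  field_simp
  ring

theorem iInf_lagrangian_eq {α : ℝ} (hα : 0 < α) {p : E → Prop} {l : E} (hl : p (α⁻¹ • l))
    (c : E) :
    ⨅ u : {u : E // p u}, ((α / 2 * ‖u.1‖ ^ 2 + ⟪l, c - u.1⟫ : ℝ) : EReal) =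
      ((⟪l, c⟫ - ‖l‖ ^ 2 / (2 * α) : ℝ) : EReal) := by
  simp_rw [lagrangian_eq_add_norm_sub_smul_sq hα.ne']
  refine le_antisymm ((iInf_le _ ⟨α⁻¹ • l, hl⟩).trans ?_) (le_iInf fun u => ?_)
  · simp
  · exact EReal.coe_le_coe_iff.mpr (le_add_of_nonneg_right (by positivity))

end InnerProductSpace

theorem rfl_dual_equals_regularized_fl_general (Θ : Type*) (n : ℕ)
    (g : Θ → EuclideanSpace ℝ (Fin n)) (ε : EuclideanSpace ℝ (Fin n))
    (α : ℝ) (hα : 0 < α) (θ : Θ) :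
    (⨆ l : {l : EuclideanSpace ℝ (Fin n) // ∀ i, 0 ≤ l i},
      ⨅ u : {u : EuclideanSpace ℝ (Fin n) // ∀ i, 0 ≤ u i},
        ((α / 2 * ‖u.1‖ ^ 2 + ⟪l.1, g θ - ε - u.1⟫ : ℝ) : EReal)) =
    ⨆ l : {l : EuclideanSpace ℝ (Fin n) // ∀ i, 0 ≤ l i},
      ((⟪l.1, g θ - ε⟫ - ‖l.1‖ ^ 2 / (2 * α) : ℝ) : EReal) :=
  iSup_congr fun l => iInf_lagrangian_eq hα
    (fun i => by simpa using mul_nonneg (inv_nonneg.mpr hα.le) (l.2 i)) _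

/-- Second equality of Proposition 1: for every `θ`, the RFL dual
`sup_{λ ≥ 0} inf_{u ≥ 0} (α/2)‖u‖² + ⟪λ, g(θ) − ε − u⟫` reduces to the quadratically
regularized FL Lagrangian `sup_{λ ≥ 0} ⟪λ, g(θ) − ε⟫ − ‖λ‖²/(2α)`, in the extended reals. -/
theorem rfl_dual_equals_regularized_fl (Θ : Type*) [Nonempty Θ] (n : ℕ)
    (g : Θ → EuclideanSpace ℝ (Fin n)) (ε : EuclideanSpace ℝ (Fin n))
    (α : ℝ) (hα : 0 < α) (θ : Θ) :
    (⨆ l : {l : EuclideanSpace ℝ (Fin n) // ∀ i, 0 ≤ l i},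
      ⨅ u : {u : EuclideanSpace ℝ (Fin n) // ∀ i, 0 ≤ u i},
        ((α / 2 * ‖u.1‖ ^ 2 + ⟪l.1, g θ - ε - u.1⟫ : ℝ) : EReal)) =
    ⨆ l : {l : EuclideanSpace ℝ (Fin n) // ∀ i, 0 ≤ l i},
      ((⟪l.1, g θ - ε⟫ - ‖l.1‖ ^ 2 / (2 * α) : ℝ) : EReal) :=
  rfl_dual_equals_regularized_fl_general Θ n g ε α hα θ
end
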